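/- arXiv:1510.00908 — 2 statements merged into one kernel-verified Lean document; each statement's English description precedes it below -/
import Mathlib

section
/- Under the stated assumptions, for any parameter ζ with R − ζ·1 and L − ζ·1 invertible, the shifted tau-function σ satisfies σ[ζ]/τ = ⟨a[ζ]| F |β⟩ = ⟨a| F (R−ζ)⁻¹ |β⟩; that is, τ[ζ]·⟨a|(R−ζ)⁻¹ F[ζ] |β⟩ = τ·⟨a|(R−ζ)⁻¹ F |β⟩ = τ·⟨a| F (R−ζ)⁻¹ |β⟩, where F[ζ] = (1 + B(L−ζ) A(R−ζ)⁻¹)⁻¹ and τ[ζ] = det(1 + A(R−ζ)⁻¹ B(L−ζ)). -/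
/-!
The shift leaves the Sylvester equation for `A` unchanged,
`(L - ζ) A - A (R - ζ) = |α⟩⟨a|`, so `1 + B (L - ζ) A (R - ζ)⁻¹` is the rank-one perturbation
`1 + B A + B|α⟩⟨a|(R - ζ)⁻¹` of `1 + B A`. The matrix determinant lemma and the
Sherman–Morrison formula then show that `τ[ζ] ⟨a|(R - ζ)⁻¹ F[ζ]` equals `τ ⟨a|(R - ζ)⁻¹ F`.

For the second identity, the Sylvester equations make `A` and `B` Cauchy-like,
`A = D_α C(L, R) D_a` and `B = D_β C(R, L) D_b` with `C(x, y)_{jk} = (x_j - y_k)⁻¹`. Since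
`C(x, y)ᵀ = -C(y, x)`, this gives `B A = D_β S D_a` with `S` symmetric, hence `D_a F D_β` is
symmetric, and a diagonal matrix such as `(R - ζ)⁻¹` can be moved across `F` inside `⟨a| · |β⟩`.
-/

open Matrix

namespace Matrix

section CommRing

variable {m n R : Type*} [Fintype m] [Fintype n] [DecidableEq m] [DecidableEq n] [CommRing R]

theorem det_add_vecMulVec {K : Matrix n n R} (hK : IsUnit K.det) (u v : n → R) :
    (K + vecMulVec u v).det = K.det * (1 + v ⬝ᵥ K⁻¹ *ᵥ u) := by
  rw [vecMulVec_eq Unit, det_add_replicateCol_mul_replicateRow hK, det_unique (1 + _)]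
  simp only [PUnit.default_eq_unit, add_apply, one_apply_eq, mul_apply, replicateRow_apply,
    replicateCol_apply, Finset.sum_mul, mul_assoc, dotProduct, mulVec, Finset.mul_sum]
  rw [Finset.sum_comm]

theorem det_smul_vecMul_inv_add_vecMulVec {K : Matrix n n R} (hK : IsUnit K.det) {u v : n → R}
    (hM : IsUnit (K + vecMulVec u v).det) :
    (K + vecMulVec u v).det • v ᵥ* (K + vecMulVec u v)⁻¹ = K.det • v ᵥ* K⁻¹ := by
  set c := 1 + v ⬝ᵥ K⁻¹ *ᵥ u
  have hvM : v ᵥ* K⁻¹ ᵥ* (K + vecMulVec u v) = c • v := by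
    rw [vecMul_add, vecMul_vecMul, nonsing_inv_mul _ hK, vecMul_one, vecMul_vecMulVec,
      ← dotProduct_mulVec, add_smul, one_smul]
  have hvK : v ᵥ* K⁻¹ = c • v ᵥ* (K + vecMulVec u v)⁻¹ := by
    calc v ᵥ* K⁻¹ = v ᵥ* K⁻¹ ᵥ* (K + vecMulVec u v) ᵥ* (K + vecMulVec u v)⁻¹ := by
          rw [vecMul_vecMul _ (K + _), mul_nonsing_inv _ hM, vecMul_one]
      _ = c • v ᵥ* (K + vecMulVec u v)⁻¹ := by rw [hvM, smul_vecMul]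
  rw [det_add_vecMulVec hK, hvK, mul_smul]

theorem sub_smul_one_mul_sub_mul_sub_smul_one (L A R' : Matrix n n R) (c : R) :
    (L - c • 1) * A - A * (R' - c • 1) = L * A - A * R' := by
  simp only [Matrix.sub_mul, Matrix.mul_sub, Matrix.smul_mul, Matrix.mul_smul, Matrix.one_mul,
    Matrix.mul_one]
  abel

theorem one_add_mul_mul_mul_inv_eq_add_vecMulVec {L A R' : Matrix n n R} {α a : n → R}
    (hA : L * A - A * R' = vecMulVec α a) (hR : IsUnit R'.det) (B : Matrix n n R) :
    1 + B * L * (A * R'⁻¹) = 1 + B * A + vecMulVec (B *ᵥ α) (a ᵥ* R'⁻¹) := by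
  have hLA : L * A = vecMulVec α a + A * R' := by rw [← hA, sub_add_cancel]
  calc 1 + B * L * (A * R'⁻¹) = 1 + B * (L * A) * R'⁻¹ := by simp only [Matrix.mul_assoc]
    _ = 1 + B * A + vecMulVec (B *ᵥ α) (a ᵥ* R'⁻¹) := by
      rw [hLA, Matrix.mul_add, Matrix.add_mul, mul_vecMulVec, vecMulVec_mul, ← Matrix.mul_assoc,
        mul_nonsing_inv_cancel_right _ _ hR, add_right_comm, add_assoc]

theorem inv_one_add_mul_mul_eq_mul_inv_one_add_mul (X : Matrix m n R) (Y : Matrix n m R) :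
    (1 + X * Y)⁻¹ * X = X * (1 + Y * X)⁻¹ := by
  by_cases h : IsUnit (1 + X * Y).det
  · have h' : IsUnit (1 + Y * X).det := by rwa [← det_one_add_mul_comm]
    have hXY : (1 + X * Y) * X = X * (1 + Y * X) := by
      rw [Matrix.add_mul, Matrix.mul_add, Matrix.one_mul, Matrix.mul_one, Matrix.mul_assoc]
    calc (1 + X * Y)⁻¹ * X = (1 + X * Y)⁻¹ * (X * (1 + Y * X)) * (1 + Y * X)⁻¹ := by
          rw [Matrix.mul_assoc, mul_nonsing_inv_cancel_right _ _ h']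
      _ = X * (1 + Y * X)⁻¹ := by rw [← hXY, nonsing_inv_mul_cancel_left _ _ h]
  · have h' : ¬IsUnit (1 + Y * X).det := by rwa [← det_one_add_mul_comm]
    rw [nonsing_inv_apply_not_isUnit _ h, nonsing_inv_apply_not_isUnit _ h',
      Matrix.zero_mul, Matrix.mul_zero]

theorem IsSymm.mul_inv_one_add_mul {S D : Matrix n n R} (hS : S.IsSymm) (hD : D.IsSymm) :
    (D * (1 + S * D)⁻¹).IsSymm := by
  rw [IsSymm, transpose_mul, transpose_nonsing_inv, transpose_add, transpose_one, transpose_mul,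
    hS.eq, hD.eq, inv_one_add_mul_mul_eq_mul_inv_one_add_mul]

theorem IsSymm.diagonal_mul_inv_one_add_mul_diagonal {S : Matrix n n R} (hS : S.IsSymm)
    (a b : n → R) : (diagonal a * (1 + diagonal b * S * diagonal a)⁻¹ * diagonal b).IsSymm := by
  rw [Matrix.mul_assoc (diagonal b), Matrix.mul_assoc (diagonal a),
    inv_one_add_mul_mul_eq_mul_inv_one_add_mul, ← Matrix.mul_assoc, Matrix.mul_assoc S,
    diagonal_mul_diagonal]
  exact hS.mul_inv_one_add_mul (isSymm_diagonal _)

theorem vecMul_diagonal_mul_dotProduct_of_isSymm {M : Matrix n n R} {a b : n → R}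
    (hM : (diagonal a * M * diagonal b).IsSymm) (d : n → R) :
    a ᵥ* (diagonal d * M) ⬝ᵥ b = a ᵥ* (M * diagonal d) ⬝ᵥ b := by
  have hM' : ∀ j k, a j * M j k * b k = a k * M k j * b j := fun j k => by
    simpa [mul_diagonal, diagonal_mul] using (hM.apply j k).symm
  simp only [dotProduct, vecMul, diagonal_mul, mul_diagonal, Finset.sum_mul]
  conv_rhs => rw [Finset.sum_comm]
  refine Finset.sum_congr rfl fun j _ => Finset.sum_congr rfl fun k _ => ?_
  linear_combination d k * hM' k j

end CommRing

section Field

variable {m n 𝕜 : Type*} [Field 𝕜]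

def cauchyMatrix (x : m → 𝕜) (y : n → 𝕜) : Matrix m n 𝕜 :=
  of fun j k => (x j - y k)⁻¹

theorem cauchyMatrix_transpose (x : m → 𝕜) (y : n → 𝕜) :
    (cauchyMatrix x y)ᵀ = -cauchyMatrix y x := by
  ext j k
  simp [cauchyMatrix, ← inv_neg]

variable [Fintype n] [DecidableEq n]

theorem isSymm_cauchyMatrix_mul_diagonal_mul_cauchyMatrix (x : m → 𝕜) (y : n → 𝕜) (d : n → 𝕜) :
    (cauchyMatrix x y * diagonal d * cauchyMatrix y x).IsSymm := by
  rw [IsSymm, transpose_mul, transpose_mul, cauchyMatrix_transpose, cauchyMatrix_transpose,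
    diagonal_transpose]
  simp only [Matrix.neg_mul, Matrix.mul_neg, neg_neg, Matrix.mul_assoc]

variable [Fintype m] [DecidableEq m]

theorem eq_diagonal_mul_cauchyMatrix_mul_diagonal {x : m → 𝕜} {y : n → 𝕜}
    (hxy : ∀ j k, x j ≠ y k) {A : Matrix m n 𝕜} {α : m → 𝕜} {a : n → 𝕜}
    (hA : diagonal x * A - A * diagonal y = vecMulVec α a) :
    A = diagonal α * cauchyMatrix x y * diagonal a := by
  ext j k
  have h := congrFun₂ hA j k
  simp only [sub_apply, diagonal_mul, mul_diagonal, vecMulVec_apply] at h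
  simp only [diagonal_mul, mul_diagonal, cauchyMatrix, of_apply]
  field_simp [sub_ne_zero.mpr (hxy j k)]
  linear_combination h

end Field

end Matrix

theorem statement2_general {n : ℕ} (l r : Fin n → ℂ)
    (hlr : ∀ j k, l j ≠ r k) (α β a b : Fin n → ℂ)
    (A B : Matrix (Fin n) (Fin n) ℂ)
    (hA : Matrix.diagonal l * A - A * Matrix.diagonal r = Matrix.vecMulVec α a)
    (hB : Matrix.diagonal r * B - B * Matrix.diagonal l = Matrix.vecMulVec β b)
    (ζ : ℂ)
    (hinv : IsUnit (1 + A * B))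
    (hinv' : IsUnit (1 + A * (Matrix.diagonal r - ζ • 1)⁻¹ *
        (B * (Matrix.diagonal l - ζ • 1)))) :
    (1 + A * (Matrix.diagonal r - ζ • 1)⁻¹ * (B * (Matrix.diagonal l - ζ • 1))).det *
        (Matrix.vecMul a ((Matrix.diagonal r - ζ • 1)⁻¹ *
          (1 + B * (Matrix.diagonal l - ζ • 1) * (A * (Matrix.diagonal r - ζ • 1)⁻¹))⁻¹) ⬝ᵥ β)
      = (1 + A * B).det *
        (Matrix.vecMul a ((Matrix.diagonal r - ζ • 1)⁻¹ * (1 + B * A)⁻¹) ⬝ᵥ β) ∧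
    (1 + A * B).det *
        (Matrix.vecMul a ((Matrix.diagonal r - ζ • 1)⁻¹ * (1 + B * A)⁻¹) ⬝ᵥ β)
      = (1 + A * B).det *
        (Matrix.vecMul a ((1 + B * A)⁻¹ * (Matrix.diagonal r - ζ • 1)⁻¹) ⬝ᵥ β) := by
  have hK : IsUnit (1 + B * A).det := by
    rw [← det_one_add_mul_comm]; exact (isUnit_iff_isUnit_det _).mp hinv
  rw [det_one_add_mul_comm A B, det_one_add_mul_comm (A * _)]
  refine ⟨?_, ?_⟩
  · by_cases hR : IsUnit (diagonal r - ζ • 1).det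
    · have hM := one_add_mul_mul_mul_inv_eq_add_vecMulVec
        ((sub_smul_one_mul_sub_mul_sub_smul_one _ _ _ ζ).trans hA) hR B
      have hMdet := (isUnit_iff_isUnit_det _).mp hinv'
      rw [det_one_add_mul_comm, hM] at hMdet
      rw [← vecMul_vecMul, ← vecMul_vecMul, hM, ← smul_eq_mul, ← smul_dotProduct,
        det_smul_vecMul_inv_add_vecMulVec hK hMdet, smul_dotProduct, smul_eq_mul]
    · -- the junk value `(R - ζ)⁻¹ = 0` makes both sides vanish
      simp [nonsing_inv_apply_not_isUnit _ hR]
  · have hBA : B * A = diagonal β * (cauchyMatrix r l * diagonal (b * α) * cauchyMatrix l r) *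
        diagonal a := by
      rw [eq_diagonal_mul_cauchyMatrix_mul_diagonal hlr hA,
        eq_diagonal_mul_cauchyMatrix_mul_diagonal (fun j k => (hlr k j).symm) hB]
      simp only [Matrix.mul_assoc]
      rw [← Matrix.mul_assoc (diagonal b), diagonal_mul_diagonal]
      rfl
    have hF : (diagonal a * (1 + B * A)⁻¹ * diagonal β).IsSymm := hBA ▸
      IsSymm.diagonal_mul_inv_one_add_mul_diagonal
        (isSymm_cauchyMatrix_mul_diagonal_mul_cauchyMatrix r l (b * α)) a β
    rw [smul_one_eq_diagonal, diagonal_sub, inv_diagonal,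
      vecMul_diagonal_mul_dotProduct_of_isSymm hF]

/-- `σ[ζ]/τ = ⟨a[ζ]|F|β⟩ = ⟨a|F(R−ζ)⁻¹|β⟩`, i.e.
`τ[ζ]·⟨a|(R−ζ)⁻¹F[ζ]|β⟩ = τ·⟨a|(R−ζ)⁻¹F|β⟩ = τ·⟨a|F(R−ζ)⁻¹|β⟩`, where
`F[ζ] = (1 + B(L−ζ)A(R−ζ)⁻¹)⁻¹` and `τ[ζ] = det(1 + A(R−ζ)⁻¹B(L−ζ))`. -/
theorem statement2 {n : ℕ} (hn : 1 ≤ n) (l r : Fin n → ℂ)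
    (hlr : ∀ j k, l j ≠ r k) (α β a b : Fin n → ℂ)
    (A B : Matrix (Fin n) (Fin n) ℂ)
    (hA : Matrix.diagonal l * A - A * Matrix.diagonal r = Matrix.vecMulVec α a)
    (hB : Matrix.diagonal r * B - B * Matrix.diagonal l = Matrix.vecMulVec β b)
    (ζ : ℂ)
    (hζR : IsUnit (Matrix.diagonal r - ζ • (1 : Matrix (Fin n) (Fin n) ℂ)))
    (hζL : IsUnit (Matrix.diagonal l - ζ • (1 : Matrix (Fin n) (Fin n) ℂ)))
    (hinv : IsUnit (1 + A * B))
    (hinv' : IsUnit (1 + A * (Matrix.diagonal r - ζ • 1)⁻¹ *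
        (B * (Matrix.diagonal l - ζ • 1)))) :
    (1 + A * (Matrix.diagonal r - ζ • 1)⁻¹ * (B * (Matrix.diagonal l - ζ • 1))).det *
        (Matrix.vecMul a ((Matrix.diagonal r - ζ • 1)⁻¹ *
          (1 + B * (Matrix.diagonal l - ζ • 1) * (A * (Matrix.diagonal r - ζ • 1)⁻¹))⁻¹) ⬝ᵥ β)
      = (1 + A * B).det *
        (Matrix.vecMul a ((Matrix.diagonal r - ζ • 1)⁻¹ * (1 + B * A)⁻¹) ⬝ᵥ β) ∧
    (1 + A * B).det *
        (Matrix.vecMul a ((Matrix.diagonal r - ζ • 1)⁻¹ * (1 + B * A)⁻¹) ⬝ᵥ β)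
      = (1 + A * B).det *
        (Matrix.vecMul a ((1 + B * A)⁻¹ * (Matrix.diagonal r - ζ • 1)⁻¹) ⬝ᵥ β) :=
  statement2_general l r hlr α β a b A B hA hB ζ hinv hinv'
end

section
/- Under the stated assumptions, for any finite multisets X, Y of admissible parameters and any admissible parameter ζ, the shifted tau-functions satisfy (ρ[X ζ̄] · τ[Y ζ]) / (τ[X] · τ[Y]) = ⟨b[X]| G[X] · K · G[Y] |α⟩, where K = (L−ζ)⁻¹ + A[Y](R−ζ)⁻¹ B[Y]. -/
open Matrix

noncomputable section

/-- The diagonal matrix `∏_{ξ ∈ X} (diagonal d − ξ·1)` for a multiset `X` of parameters. -/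
def sProd {n : ℕ} (d : Fin n → ℂ) (X : Multiset ℂ) : Matrix (Fin n) (Fin n) ℂ :=
  Matrix.diagonal fun i => (X.map fun ξ => d i - ξ).prod

/-- The multiset-shifted matrix `A[X] = A·∏_{ξ∈X}(R−ξ)⁻¹`. -/
def shA {n : ℕ} (r : Fin n → ℂ) (A : Matrix (Fin n) (Fin n) ℂ) (X : Multiset ℂ) :
    Matrix (Fin n) (Fin n) ℂ :=
  A * (sProd r X)⁻¹

/-- The multiset-shifted matrix `B[X] = B·∏_{ξ∈X}(L−ξ)`. -/
def shB {n : ℕ} (l : Fin n → ℂ) (B : Matrix (Fin n) (Fin n) ℂ) (X : Multiset ℂ) :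
    Matrix (Fin n) (Fin n) ℂ :=
  B * sProd l X

/-- The shifted tau-function `τ[X] = det(1 + A[X] B[X])`. -/
def shtau {n : ℕ} (l r : Fin n → ℂ) (A B : Matrix (Fin n) (Fin n) ℂ) (X : Multiset ℂ) : ℂ :=
  (1 + shA r A X * shB l B X).det

/-- The shifted tau-function `σ[X] = τ[X]·⟨a[X]|(1+B[X]A[X])⁻¹|β⟩`. -/
def shsigma {n : ℕ} (l r a β : Fin n → ℂ) (A B : Matrix (Fin n) (Fin n) ℂ)
    (X : Multiset ℂ) : ℂ :=
  shtau l r A B X *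
    (Matrix.vecMul (Matrix.vecMul a (sProd r X)⁻¹) (1 + shB l B X * shA r A X)⁻¹ ⬝ᵥ β)

/-- The shifted tau-function `ρ[X] = τ[X]·⟨b[X]|(1+A[X]B[X])⁻¹|α⟩`. -/
def shrho {n : ℕ} (l r b α : Fin n → ℂ) (A B : Matrix (Fin n) (Fin n) ℂ)
    (X : Multiset ℂ) : ℂ :=
  shtau l r A B X *
    (Matrix.vecMul (Matrix.vecMul b (sProd l X)) (1 + shA r A X * shB l B X)⁻¹ ⬝ᵥ α)

/-- A parameter `ξ` is admissible if `R − ξ·1` and `L − ξ·1` are invertible. -/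
def Adm {n : ℕ} (l r : Fin n → ℂ) (ξ : ℂ) : Prop :=
  IsUnit (Matrix.diagonal r - ξ • (1 : Matrix (Fin n) (Fin n) ℂ)) ∧
    IsUnit (Matrix.diagonal l - ξ • (1 : Matrix (Fin n) (Fin n) ℂ))

/-- `Γ_ξ(Y, X) = ∏_{η∈Y}(ξ−η) / ∏_{η∈X, η≠ξ}(ξ−η)`. -/
def Gam (Y : Multiset ℂ) (X : Finset ℂ) (ξ : ℂ) : ℂ :=
  (Y.map fun η => ξ - η).prod / ∏ η ∈ X.erase ξ, (ξ - η)

/-! Shifting by `X` multiplies `A` and `B` on the right by diagonal matrices commuting with `L`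
and `R`, so the shifted data solve Sylvester equations with the same `α`, `β`; replacing `l, r` by
`l - ζ, r - ζ` then reduces the claim to `ζ = 0`. There `1 + A R B L⁻¹` and `1 + A R⁻¹ B L` are
rank-one perturbations of `1 + A B`, which the matrix determinant lemma handles. What remains is a
symmetry: `A B = D_α C D_b` with `C` symmetric, whence `b ⊙ G α = (b G) ⊙ α` for `G = (1 + A B)⁻¹`,
and diagonal matrices can be moved across `G` in the bilinear forms that occur. -/

namespace Matrix

theorem det_add_vecMulVec_s7 {ι R : Type*} [Fintype ι] [DecidableEq ι] [CommRing R]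
    {M : Matrix ι ι R} (hM : IsUnit M.det) (u v : ι → R) :
    (M + vecMulVec u v).det = M.det * (1 + v ᵥ* M⁻¹ ⬝ᵥ u) := by
  have h : M + vecMulVec u v = M * (1 + vecMulVec (M⁻¹ *ᵥ u) v) := by
    rw [Matrix.mul_add, Matrix.mul_one, mul_vecMulVec, mulVec_mulVec, mul_nonsing_inv _ hM,
      one_mulVec]
  rw [h, det_mul, vecMulVec_eq Unit, det_one_add_replicateCol_mul_replicateRow,
    dotProduct_mulVec]

variable {ι K : Type*} [Fintype ι] [DecidableEq ι] [Field K]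

theorem det_mul_vecMul_inv_add_vecMulVec {M : Matrix ι ι K} (hM : IsUnit M) {u v : ι → K}
    (hW : IsUnit (M + vecMulVec u v)) (w : ι → K) :
    (M + vecMulVec u v).det * (v ᵥ* (M + vecMulVec u v)⁻¹ ⬝ᵥ w)
      = M.det * (v ᵥ* M⁻¹ ⬝ᵥ w) := by
  rw [isUnit_iff_isUnit_det] at hM hW
  have hdet := det_add_vecMulVec_s7 hM u v
  set c := v ᵥ* M⁻¹ ⬝ᵥ u
  have hc : 1 + c ≠ 0 := fun h => by simp [hdet, h] at hW
  have hv : v ᵥ* M⁻¹ ᵥ* (M + vecMulVec u v) = (1 + c) • v := by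
    rw [vecMul_add, vecMul_vecMul, nonsing_inv_mul _ hM, vecMul_one, vecMul_vecMulVec,
      add_smul, one_smul]
  have hvW : v ᵥ* (M + vecMulVec u v)⁻¹ = (1 + c)⁻¹ • (v ᵥ* M⁻¹) := by
    rw [← vecMul_one (v ᵥ* M⁻¹), ← mul_nonsing_inv _ hW, ← vecMul_vecMul, hv, smul_vecMul,
      smul_smul, inv_mul_cancel₀ hc, one_smul]
  rw [hvW, hdet, smul_dotProduct, smul_eq_mul]
  field_simp

omit [Fintype ι] in
theorem diagonal_sub_smul_one (d : ι → K) (c : K) :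
    diagonal d - c • 1 = diagonal fun i => d i - c := by
  rw [smul_one_eq_diagonal, diagonal_sub]

variable {l r α a β b : ι → K} {A B : Matrix ι ι K}

theorem sylvester_apply (hlr : ∀ j k, l j ≠ r k)
    (hA : diagonal l * A - A * diagonal r = vecMulVec α a) (j k : ι) :
    A j k = α j * a k / (l j - r k) := by
  have h := congrFun₂ hA j k
  simp only [sub_apply, diagonal_mul, mul_diagonal, vecMulVec_apply] at h
  rw [eq_div_iff (sub_ne_zero.mpr (hlr j k)), ← h]
  ring

theorem sylvester_mul_of_commute (hA : diagonal l * A - A * diagonal r = vecMulVec α a)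
    {Q : Matrix ι ι K} (hQ : Commute (diagonal r) Q) :
    diagonal l * (A * Q) - A * Q * diagonal r = vecMulVec α (a ᵥ* Q) := by
  rw [Matrix.mul_assoc A, ← hQ.eq, ← Matrix.mul_assoc, ← Matrix.mul_assoc, ← Matrix.sub_mul,
    hA, vecMulVec_mul]

theorem sylvester_sub_const (hA : diagonal l * A - A * diagonal r = vecMulVec α a) (c : K) :
    diagonal (fun i => l i - c) * A - A * diagonal (fun i => r i - c) = vecMulVec α a := by
  rw [← diagonal_sub_smul_one, ← diagonal_sub_smul_one, ← hA, Matrix.sub_mul, Matrix.mul_sub,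
    Matrix.smul_mul, Matrix.mul_smul, Matrix.one_mul, Matrix.mul_one]
  abel

theorem exists_transpose_eq_mul_eq_of_sylvester (hlr : ∀ j k, l j ≠ r k) (hA : diagonal l * A - A * diagonal r = vecMulVec α a)
    (hB : diagonal r * B - B * diagonal l = vecMulVec β b) :
    ∃ C : Matrix ι ι K, Cᵀ = C ∧ A * B = diagonal α * C * diagonal b := by
  refine ⟨of fun j k => ∑ m, a m * β m * ((l j - r m)⁻¹ * (r m - l k)⁻¹), ?_, ?_⟩
  · ext j k
    refine Finset.sum_congr rfl fun m _ => ?_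
    rw [← mul_inv, ← mul_inv, show (l k - r m) * (r m - l j) = (l j - r m) * (r m - l k) by ring]
  · ext j k
    have hrl : ∀ j k, r j ≠ l k := fun j k => (hlr k j).symm
    rw [mul_diagonal, diagonal_mul, mul_apply]
    simp only [of_apply, sylvester_apply hlr hA, sylvester_apply hrl hB, Finset.mul_sum,
      Finset.sum_mul]
    refine Finset.sum_congr rfl fun m _ => ?_
    ring

theorem mul_inv_mulVec_eq_vecMul_inv_mul {C : Matrix ι ι K} (hC : Cᵀ = C) {u v : ι → K}
    (hN : IsUnit (1 + diagonal u * C * diagonal v)) :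
    v * ((1 + diagonal u * C * diagonal v)⁻¹ *ᵥ u)
      = (v ᵥ* (1 + diagonal u * C * diagonal v)⁻¹) * u := by
  set N := 1 + diagonal u * C * diagonal v
  set P := 1 + diagonal (fun i => u i * v i) * C
  have hvN : diagonal v * N = P * diagonal v := by
    simp only [N, P, Matrix.mul_add, Matrix.add_mul, Matrix.mul_one, Matrix.one_mul,
      ← Matrix.mul_assoc, (commute_diagonal v u).eq, diagonal_mul_diagonal]
  have huN : diagonal u * Nᵀ = P * diagonal u := by
    simp only [N, P, transpose_add, transpose_one, transpose_mul, diagonal_transpose, hC,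
      Matrix.mul_add, Matrix.add_mul, Matrix.mul_one, Matrix.one_mul, ← Matrix.mul_assoc,
      diagonal_mul_diagonal]
  have hdetN : N.det = P.det := by
    simp only [N, P]
    rw [det_one_add_mul_comm, ← Matrix.mul_assoc, (commute_diagonal v u).eq,
      diagonal_mul_diagonal]
  have hNdet : IsUnit N.det := (isUnit_iff_isUnit_det _).mp hN
  have hNTdet : IsUnit Nᵀ.det := by rwa [det_transpose]
  have hP : Function.Injective (P *ᵥ ·) :=
    mulVec_injective_iff_isUnit.mpr ((isUnit_iff_isUnit_det _).mpr (hdetN ▸ hNdet))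
  have hmul : ∀ w x : ι → K, w * x = diagonal w *ᵥ x := fun w x =>
    funext fun i => (mulVec_diagonal w x i).symm
  apply hP
  calc P *ᵥ (v * (N⁻¹ *ᵥ u))
      = (diagonal v * N * N⁻¹) *ᵥ u := by
        rw [hmul, mulVec_mulVec, mulVec_mulVec, hvN, Matrix.mul_assoc]
    _ = (diagonal u * Nᵀ * Nᵀ⁻¹) *ᵥ v := by
        rw [Matrix.mul_nonsing_inv_cancel_right _ _ hNdet,
          Matrix.mul_nonsing_inv_cancel_right _ _ hNTdet, ← hmul, ← hmul, mul_comm]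
    _ = P *ᵥ ((v ᵥ* N⁻¹) * u) := by
        rw [mul_comm, hmul, ← mulVec_transpose, transpose_nonsing_inv, mulVec_mulVec,
          mulVec_mulVec, huN, Matrix.mul_assoc]

theorem sylvester_mul_inv_mulVec (hlr : ∀ j k, l j ≠ r k)
    (hA : diagonal l * A - A * diagonal r = vecMulVec α a)
    (hB : diagonal r * B - B * diagonal l = vecMulVec β b) (hN : IsUnit (1 + A * B)) :
    b * ((1 + A * B)⁻¹ *ᵥ α) = (b ᵥ* (1 + A * B)⁻¹) * α := by
  obtain ⟨C, hC, hAB⟩ := exists_transpose_eq_mul_eq_of_sylvester hlr hA hB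
  rw [hAB] at hN ⊢
  exact mul_inv_mulVec_eq_vecMul_inv_mul hC hN

theorem sylvester_vecMul_diagonal_dotProduct (hlr : ∀ j k, l j ≠ r k)
    (hA : diagonal l * A - A * diagonal r = vecMulVec α a)
    (hB : diagonal r * B - B * diagonal l = vecMulVec β b) (hN : IsUnit (1 + A * B))
    (d : ι → K) :
    b ᵥ* diagonal d ᵥ* (1 + A * B)⁻¹ ⬝ᵥ α = b ᵥ* (1 + A * B)⁻¹ ⬝ᵥ (diagonal d *ᵥ α) := by
  have h := sylvester_mul_inv_mulVec hlr hA hB hN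
  rw [← dotProduct_mulVec]
  simp only [dotProduct, vecMul_diagonal, mulVec_diagonal, funext_iff, Pi.mul_apply] at h ⊢
  refine Finset.sum_congr rfl fun j _ => ?_
  linear_combination d j * h j

theorem sylvester_vecMul_diagonal_mul_dotProduct (hlr : ∀ j k, l j ≠ r k)
    (hA : diagonal l * A - A * diagonal r = vecMulVec α a)
    (hB : diagonal r * B - B * diagonal l = vecMulVec β b) (hN : IsUnit (1 + A * B))
    (d : ι → K) :
    a ᵥ* diagonal d ᵥ* B ᵥ* (1 + A * B)⁻¹ ⬝ᵥ α
      = -(b ᵥ* (1 + A * B)⁻¹ ᵥ* A ⬝ᵥ (diagonal d *ᵥ β)) := by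
  have h := sylvester_mul_inv_mulVec hlr hA hB hN
  rw [← dotProduct_mulVec]
  set x := (1 + A * B)⁻¹ *ᵥ α
  set y := b ᵥ* (1 + A * B)⁻¹
  simp only [funext_iff, Pi.mul_apply] at h
  have hd : a ᵥ* diagonal d = fun m => a m * d m := funext (vecMul_diagonal a d)
  rw [hd]
  simp only [dotProduct, vecMul, mulVec_diagonal, Finset.sum_mul, ← Finset.sum_neg_distrib]
  rw [Finset.sum_comm]
  refine Finset.sum_congr rfl fun m _ => Finset.sum_congr rfl fun j _ => ?_
  have hrl : r m - l j = -(l j - r m) := (neg_sub _ _).symm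
  rw [sylvester_apply hlr hA, sylvester_apply (fun j k => (hlr k j).symm) hB, hrl, div_neg]
  linear_combination (-(a m * d m * β m / (l j - r m))) * h j

-- `ρ[ζ̄] = τ·⟨b|G (L - ζ)⁻¹|α⟩`, written for `ζ = 0`.
theorem sylvester_det_mul_vecMul_inv_shift (hlr : ∀ j k, l j ≠ r k)
    (hA : diagonal l * A - A * diagonal r = vecMulVec α a)
    (hB : diagonal r * B - B * diagonal l = vecMulVec β b) (hl : IsUnit (diagonal l))
    (hN : IsUnit (1 + A * B)) (hW : IsUnit (1 + A * diagonal r * (B * (diagonal l)⁻¹))) :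
    (1 + A * diagonal r * (B * (diagonal l)⁻¹)).det *
        (b ᵥ* (diagonal l)⁻¹ ᵥ* (1 + A * diagonal r * (B * (diagonal l)⁻¹))⁻¹ ⬝ᵥ α)
      = (1 + A * B).det * (b ᵥ* (1 + A * B)⁻¹ ⬝ᵥ ((diagonal l)⁻¹ *ᵥ α)) := by
  have hRB : diagonal r * B = vecMulVec β b + B * diagonal l := sub_eq_iff_eq_add.mp hB
  have hW' : 1 + A * diagonal r * (B * (diagonal l)⁻¹)
      = 1 + A * B + vecMulVec (A *ᵥ β) (b ᵥ* (diagonal l)⁻¹) := by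
    rw [Matrix.mul_assoc, ← Matrix.mul_assoc (diagonal r), hRB, Matrix.add_mul, Matrix.mul_add,
      vecMulVec_mul, mul_vecMulVec, Matrix.mul_assoc B,
      mul_nonsing_inv _ ((isUnit_iff_isUnit_det _).mp hl), Matrix.mul_one]
    abel
  rw [hW'] at hW ⊢
  rw [det_mul_vecMul_inv_add_vecMulVec hN hW, inv_diagonal,
    sylvester_vecMul_diagonal_dotProduct hlr hA hB hN]

-- `K G α = (τ[ζ] / τ) (L - ζ)⁻¹ α`, written for `ζ = 0`.
theorem sylvester_shift_mul_inv_mulVec (hlr : ∀ j k, l j ≠ r k)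
    (hA : diagonal l * A - A * diagonal r = vecMulVec α a)
    (hB : diagonal r * B - B * diagonal l = vecMulVec β b) (hl : IsUnit (diagonal l))
    (hr : IsUnit (diagonal r)) (hN : IsUnit (1 + A * B)) :
    (((diagonal l)⁻¹ + A * (diagonal r)⁻¹ * B) * (1 + A * B)⁻¹) *ᵥ α
      = ((1 + A * (diagonal r)⁻¹ * (B * diagonal l)).det / (1 + A * B).det)
          • ((diagonal l)⁻¹ *ᵥ α) := by
  have hl' := (isUnit_iff_isUnit_det _).mp hl
  have hr' := (isUnit_iff_isUnit_det _).mp hr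
  have hN' := (isUnit_iff_isUnit_det _).mp hN
  have hAR : A * (diagonal r)⁻¹ = (diagonal l)⁻¹ * (A + vecMulVec α (a ᵥ* (diagonal r)⁻¹)) := by
    calc A * (diagonal r)⁻¹ = (diagonal l)⁻¹ * (diagonal l * A * (diagonal r)⁻¹) := by
          rw [Matrix.mul_assoc (diagonal l), nonsing_inv_mul_cancel_left _ _ hl']
      _ = _ := by
          rw [sub_eq_iff_eq_add.mp hA, Matrix.add_mul, vecMulVec_mul, Matrix.mul_assoc A,
            mul_nonsing_inv _ hr', Matrix.mul_one, add_comm]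
  have hK : (((diagonal l)⁻¹ + A * (diagonal r)⁻¹ * B) * (1 + A * B)⁻¹) *ᵥ α
      = (1 + a ᵥ* (diagonal r)⁻¹ ᵥ* B ᵥ* (1 + A * B)⁻¹ ⬝ᵥ α) • ((diagonal l)⁻¹ *ᵥ α) := by
    have hKN : (diagonal l)⁻¹ + A * (diagonal r)⁻¹ * B
        = (diagonal l)⁻¹ * (1 + A * B + vecMulVec α (a ᵥ* (diagonal r)⁻¹ ᵥ* B)) := by
      rw [hAR, Matrix.mul_assoc, Matrix.add_mul, vecMulVec_mul, Matrix.mul_add, Matrix.mul_add,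
        Matrix.mul_add, Matrix.mul_one]
      abel
    rw [hKN, Matrix.mul_assoc, Matrix.add_mul, mul_nonsing_inv _ hN', vecMulVec_mul,
      ← mulVec_mulVec, add_mulVec, one_mulVec, vecMulVec_mulVec, op_smul_eq_smul, add_smul,
      one_smul, mulVec_add, mulVec_smul]
  have hq := sylvester_vecMul_diagonal_mul_dotProduct hlr hA hB hN (Ring.inverse r)
  rw [← inv_diagonal] at hq
  have hdet : (1 + A * (diagonal r)⁻¹ * (B * diagonal l)).det
      = (1 + A * B).det * (1 + a ᵥ* (diagonal r)⁻¹ ᵥ* B ᵥ* (1 + A * B)⁻¹ ⬝ᵥ α) := by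
    have hBL : B * diagonal l = diagonal r * B - vecMulVec β b := by rw [← hB, sub_sub_cancel]
    rw [hBL, Matrix.mul_sub, Matrix.mul_assoc A, nonsing_inv_mul_cancel_left _ _ hr', mul_vecMulVec,
      sub_eq_add_neg, ← neg_vecMulVec, ← add_assoc, det_add_vecMulVec_s7 hN', dotProduct_neg,
      ← mulVec_mulVec, dotProduct_mulVec, hq]
  rw [hK, hdet, mul_div_cancel_left₀ _ hN'.ne_zero]

end Matrix

section ShiftedData

variable {n : ℕ}

theorem commute_diagonal_inv_sProd (d e : Fin n → ℂ) (X : Multiset ℂ) :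
    Commute (diagonal d) (sProd e X)⁻¹ := by
  rw [sProd, inv_diagonal]
  exact commute_diagonal _ _

theorem sylvester_shA {l r α a : Fin n → ℂ} {A : Matrix (Fin n) (Fin n) ℂ}
    (hA : diagonal l * A - A * diagonal r = vecMulVec α a) (X : Multiset ℂ) :
    diagonal l * shA r A X - shA r A X * diagonal r = vecMulVec α (a ᵥ* (sProd r X)⁻¹) :=
  sylvester_mul_of_commute hA (commute_diagonal_inv_sProd r r X)

theorem sylvester_shB {l r β b : Fin n → ℂ} {B : Matrix (Fin n) (Fin n) ℂ}
    (hB : diagonal r * B - B * diagonal l = vecMulVec β b) (X : Multiset ℂ) :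
    diagonal r * shB l B X - shB l B X * diagonal l = vecMulVec β (b ᵥ* sProd l X) :=
  sylvester_mul_of_commute hB (commute_diagonal _ _)

theorem sProd_cons (d : Fin n → ℂ) (ζ : ℂ) (X : Multiset ℂ) :
    sProd d (ζ ::ₘ X) = (diagonal fun i => d i - ζ) * sProd d X := by
  simp only [sProd, diagonal_mul_diagonal, Multiset.map_cons, Multiset.prod_cons]

theorem shA_cons (r : Fin n → ℂ) (A : Matrix (Fin n) (Fin n) ℂ) (ζ : ℂ) (X : Multiset ℂ) :
    shA r A (ζ ::ₘ X) = shA r A X * (diagonal fun i => r i - ζ)⁻¹ := by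
  rw [shA, shA, sProd_cons, Matrix.mul_inv_rev, Matrix.mul_assoc]

theorem shB_cons (l : Fin n → ℂ) (B : Matrix (Fin n) (Fin n) ℂ) (ζ : ℂ) (X : Multiset ℂ) :
    shB l B (ζ ::ₘ X) = shB l B X * diagonal fun i => l i - ζ := by
  rw [shB, shB, sProd_cons, sProd, (commute_diagonal _ _).eq, Matrix.mul_assoc]

end ShiftedData

theorem statement7_general {n : ℕ} (l r : Fin n → ℂ)
    (hlr : ∀ j k, l j ≠ r k) (α β a b : Fin n → ℂ)
    (A B : Matrix (Fin n) (Fin n) ℂ)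
    (hA : Matrix.diagonal l * A - A * Matrix.diagonal r = Matrix.vecMulVec α a)
    (hB : Matrix.diagonal r * B - B * Matrix.diagonal l = Matrix.vecMulVec β b)
    (X Y : Multiset ℂ) (ζ : ℂ)
    (hζ : Adm l r ζ)
    (hiX : IsUnit (1 + shA r A X * shB l B X))
    (hiY : IsUnit (1 + shA r A Y * shB l B Y))
    (hiXz : IsUnit (1 + (shA r A X * (Matrix.diagonal r - ζ • 1)) *
        (shB l B X * (Matrix.diagonal l - ζ • 1)⁻¹))) :
    ((1 + (shA r A X * (Matrix.diagonal r - ζ • 1)) *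
          (shB l B X * (Matrix.diagonal l - ζ • 1)⁻¹)).det *
        (Matrix.vecMul
            (Matrix.vecMul (Matrix.vecMul b (sProd l X)) (Matrix.diagonal l - ζ • 1)⁻¹)
            (1 + (shA r A X * (Matrix.diagonal r - ζ • 1)) *
              (shB l B X * (Matrix.diagonal l - ζ • 1)⁻¹))⁻¹ ⬝ᵥ α)) *
        shtau l r A B (ζ ::ₘ Y) / (shtau l r A B X * shtau l r A B Y)
      = Matrix.vecMul (Matrix.vecMul b (sProd l X))
          ((1 + shA r A X * shB l B X)⁻¹ *
            ((Matrix.diagonal l - ζ • 1)⁻¹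
              + shA r A Y * (Matrix.diagonal r - ζ • 1)⁻¹ * shB l B Y) *
            (1 + shA r A Y * shB l B Y)⁻¹) ⬝ᵥ α := by
  obtain ⟨hr, hl⟩ := hζ
  simp only [diagonal_sub_smul_one] at hr hl hiXz ⊢
  have hlr' : ∀ j k, l j - ζ ≠ r k - ζ := fun j k => sub_left_injective.ne (hlr j k)
  have hAX := sylvester_sub_const (sylvester_shA hA X) ζ
  have hBX := sylvester_sub_const (sylvester_shB hB X) ζ
  have hAY := sylvester_sub_const (sylvester_shA hA Y) ζ
  have hBY := sylvester_sub_const (sylvester_shB hB Y) ζ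
  have hτX := (isUnit_iff_isUnit_det _).mp hiX
  have hτY := (isUnit_iff_isUnit_det _).mp hiY
  rw [sylvester_det_mul_vecMul_inv_shift hlr' hAX hBX hl hiX hiXz]
  conv_rhs => rw [Matrix.mul_assoc, ← vecMul_vecMul, ← dotProduct_mulVec,
    sylvester_shift_mul_inv_mulVec hlr' hAY hBY hl hr hiY]
  rw [shtau, shtau, shtau, shA_cons, shB_cons, dotProduct_smul, smul_eq_mul]
  field_simp [hτX.ne_zero, hτY.ne_zero]

/-- `(ρ[Xζ̄]·τ[Yζ])/(τ[X]·τ[Y]) = ⟨b[X]|G[X]·K·G[Y]|α⟩` with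
`K = (L−ζ)⁻¹ + A[Y](R−ζ)⁻¹B[Y]`. -/
theorem statement7 {n : ℕ} (hn : 1 ≤ n) (l r : Fin n → ℂ)
    (hlr : ∀ j k, l j ≠ r k) (α β a b : Fin n → ℂ)
    (A B : Matrix (Fin n) (Fin n) ℂ)
    (hA : Matrix.diagonal l * A - A * Matrix.diagonal r = Matrix.vecMulVec α a)
    (hB : Matrix.diagonal r * B - B * Matrix.diagonal l = Matrix.vecMulVec β b)
    (X Y : Multiset ℂ) (ζ : ℂ)
    (hX : ∀ ξ ∈ X, Adm l r ξ) (hY : ∀ ξ ∈ Y, Adm l r ξ) (hζ : Adm l r ζ)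
    (hiX : IsUnit (1 + shA r A X * shB l B X))
    (hiY : IsUnit (1 + shA r A Y * shB l B Y))
    (hiXz : IsUnit (1 + (shA r A X * (Matrix.diagonal r - ζ • 1)) *
        (shB l B X * (Matrix.diagonal l - ζ • 1)⁻¹)))
    (hiYz : IsUnit (1 + shA r A (ζ ::ₘ Y) * shB l B (ζ ::ₘ Y))) :
    ((1 + (shA r A X * (Matrix.diagonal r - ζ • 1)) *
          (shB l B X * (Matrix.diagonal l - ζ • 1)⁻¹)).det *
        (Matrix.vecMul
            (Matrix.vecMul (Matrix.vecMul b (sProd l X)) (Matrix.diagonal l - ζ • 1)⁻¹)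
            (1 + (shA r A X * (Matrix.diagonal r - ζ • 1)) *
              (shB l B X * (Matrix.diagonal l - ζ • 1)⁻¹))⁻¹ ⬝ᵥ α)) *
        shtau l r A B (ζ ::ₘ Y) / (shtau l r A B X * shtau l r A B Y)
      = Matrix.vecMul (Matrix.vecMul b (sProd l X))
          ((1 + shA r A X * shB l B X)⁻¹ *
            ((Matrix.diagonal l - ζ • 1)⁻¹
              + shA r A Y * (Matrix.diagonal r - ζ • 1)⁻¹ * shB l B Y) *
            (1 + shA r A Y * shB l B Y)⁻¹) ⬝ᵥ α :=
  statement7_general l r hlr α β a b A B hA hB X Y ζ hζ hiX hiY hiXz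
end
end
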